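/- arXiv:1301.1011 — 6 statements merged into one kernel-verified Lean document; each statement's English description precedes it below -/
import Mathlib

section
/- If (d_k)_{k≥1} is a sequence of complex numbers with ∑_{k≥1} |d_k|² = 1 and ∑_{k≥1} d_k² = 0, then for all k ≠ m one has |d_k ± d_m|² ≤ 1, i.e. |d_k + d_m|² ≤ 1 and |d_k − d_m|² ≤ 1. -/
/-!
Write `x = d k`, `y = d m`. The two identities give `x² + y² = -∑_{j ≠ k, m} d_j²`, so
`‖x² + y²‖ ≤ ∑_{j ≠ k, m} ‖d_j‖² = 1 - ‖x‖² - ‖y‖²`. Expanding `(x ± y)² = x² + y² ± 2xy` then gives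
`‖x ± y‖² ≤ 1 - (‖x‖ - ‖y‖)² ≤ 1`.
-/

theorem norm_tsum_sub_sum_le {ι E : Type*} [NormedAddCommGroup E] [CompleteSpace E]
    {g : ι → E} (hg : Summable fun i => ‖g i‖) (s : Finset ι) :
    ‖∑' i, g i - ∑ i ∈ s, g i‖ ≤ ∑' i, ‖g i‖ - ∑ i ∈ s, ‖g i‖ := by
  rw [← hg.of_norm.sum_add_tsum_compl (s := s), ← hg.sum_add_tsum_compl (s := s),
    add_sub_cancel_left, add_sub_cancel_left]
  exact norm_tsum_le_tsum_norm (hg.subtype _)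

section RCLike

variable {𝕜 : Type*} [RCLike 𝕜]

theorem norm_add_sq_le_norm_sq_add_sq (x y : 𝕜) :
    ‖x + y‖ ^ 2 ≤ ‖x ^ 2 + y ^ 2‖ + 2 * ‖x‖ * ‖y‖ :=
  calc ‖x + y‖ ^ 2 = ‖(x ^ 2 + y ^ 2) + 2 * x * y‖ := by rw [← norm_pow]; ring_nf
    _ ≤ ‖x ^ 2 + y ^ 2‖ + ‖2 * x * y‖ := norm_add_le _ _
    _ = ‖x ^ 2 + y ^ 2‖ + 2 * ‖x‖ * ‖y‖ := by rw [norm_mul, norm_mul, RCLike.norm_two]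

theorem norm_sub_sq_le_norm_sq_add_sq (x y : 𝕜) :
    ‖x - y‖ ^ 2 ≤ ‖x ^ 2 + y ^ 2‖ + 2 * ‖x‖ * ‖y‖ := by
  simpa [neg_sq, ← sub_eq_add_neg] using norm_add_sq_le_norm_sq_add_sq x (-y)

theorem norm_add_sq_le_one_and_norm_sub_sq_le_one {x y : 𝕜}
    (h : ‖x ^ 2 + y ^ 2‖ ≤ 1 - ‖x‖ ^ 2 - ‖y‖ ^ 2) :
    ‖x + y‖ ^ 2 ≤ 1 ∧ ‖x - y‖ ^ 2 ≤ 1 := by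
  have h_sq : 0 ≤ (‖x‖ - ‖y‖) ^ 2 := sq_nonneg _
  exact ⟨by linarith [norm_add_sq_le_norm_sq_add_sq x y],
    by linarith [norm_sub_sq_le_norm_sq_add_sq x y]⟩

theorem norm_sq_add_sq_le_tsum_of_ne {ι : Type*} {f : ι → 𝕜}
    (hf : Summable fun i => ‖f i‖ ^ 2) {i j : ι} (hij : i ≠ j) :
    ‖∑' k, f k ^ 2 - (f i ^ 2 + f j ^ 2)‖ ≤ ∑' k, ‖f k‖ ^ 2 - (‖f i‖ ^ 2 + ‖f j‖ ^ 2) := by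
  classical
  have hf' : Summable fun k => ‖f k ^ 2‖ := by simpa only [norm_pow] using hf
  simpa [Finset.sum_pair hij] using norm_tsum_sub_sum_le hf' {i, j}

end RCLike

theorem stmt_1_general (d : ℕ → ℂ)
    (hnorm : ∑' k : ℕ, ‖d (k + 1)‖ ^ 2 = 1)
    (horth : ∑' k : ℕ, (d (k + 1)) ^ 2 = 0) :
    ∀ k m : ℕ, 1 ≤ k → 1 ≤ m → k ≠ m →
      ‖d k + d m‖ ^ 2 ≤ 1 ∧ ‖d k - d m‖ ^ 2 ≤ 1 := by
  intro k m hk hm hkm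
  have hs : Summable fun k => ‖d (k + 1)‖ ^ 2 := by
    by_contra h
    simp [tsum_eq_zero_of_not_summable h] at hnorm
  obtain ⟨a, rfl⟩ : ∃ a, k = a + 1 := ⟨k - 1, by omega⟩
  obtain ⟨b, rfl⟩ : ∃ b, m = b + 1 := ⟨m - 1, by omega⟩
  have hab : a ≠ b := by omega
  have key := norm_sq_add_sq_le_tsum_of_ne hs hab
  rw [hnorm, horth, zero_sub, norm_neg] at key
  exact norm_add_sq_le_one_and_norm_sub_sq_le_one (by linarith)

theorem stmt_1 (d : ℕ → ℂ)
    (hs1 : Summable (fun k => ‖d (k + 1)‖ ^ 2))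
    (hs2 : Summable (fun k => (d (k + 1)) ^ 2))
    (hnorm : ∑' k : ℕ, ‖d (k + 1)‖ ^ 2 = 1)
    (horth : ∑' k : ℕ, (d (k + 1)) ^ 2 = 0) :
    ∀ k m : ℕ, 1 ≤ k → 1 ≤ m → k ≠ m →
      ‖d k + d m‖ ^ 2 ≤ 1 ∧ ‖d k - d m‖ ^ 2 ≤ 1 :=
  stmt_1_general d hnorm horth
end

section
/- Let a, λ ∈ ℂ with a ≠ 0 and let (d_k)_{k≥1} be a not identically zero sequence tending to 0 with (λ−(2k−1)²) d_k = a d_{k−1} + a d_{k+1} for k ≥ 2. If Re λ < (2p−1)² − 2|a| for some p ≥ 1, then for every k > p one has |d_{k−1}| > |d_k| > 0. -/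
theorem stmt_3 (a lam : ℂ) (ha : a ≠ 0) (d : ℕ → ℂ)
    (hnz : ∃ k : ℕ, 1 ≤ k ∧ d k ≠ 0)
    (hlim : Filter.Tendsto d Filter.atTop (nhds 0))
    (hrec : ∀ k : ℕ, 2 ≤ k → (lam - (2 * (k : ℂ) - 1) ^ 2) * d k = a * d (k - 1) + a * d (k + 1))
    (p : ℕ) (hp : 1 ≤ p)
    (hre : lam.re < (2 * (p : ℝ) - 1) ^ 2 - 2 * ‖a‖) :
    ∀ k : ℕ, p < k → ‖d (k - 1)‖ > ‖d k‖ ∧ ‖d k‖ > 0 := by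
  have ha' : 0 < ‖a‖ := norm_pos_iff.mpr ha
  -- shifted recurrence
  have hrec' : ∀ j : ℕ, 1 ≤ j →
      (lam - (2 * ((j : ℂ) + 1) - 1) ^ 2) * d (j + 1) = a * d j + a * d (j + 2) := by
    intro j hj
    have h := hrec (j + 1) (by omega)
    have h1 : ((j : ℕ) + 1 : ℕ) - 1 = j := by omega
    rw [h1] at h
    push_cast at h ⊢
    exact h
  -- the diagonal is big
  have hbig : ∀ j : ℕ, p ≤ j → 2 * ‖a‖ < ‖lam - (2 * ((j : ℂ) + 1) - 1) ^ 2‖ := by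
    intro j hj
    set r : ℝ := (2 * ((j : ℝ) + 1) - 1) ^ 2 with hrdef
    have hcast : (2 * ((j : ℂ) + 1) - 1) ^ 2 = (r : ℂ) := by rw [hrdef]; push_cast; ring
    rw [hcast]
    have hpj : (p : ℝ) ≤ j := Nat.cast_le.mpr hj
    have hp1 : (1 : ℝ) ≤ p := by exact_mod_cast hp
    have h1 : (2 * (p : ℝ) - 1) ^ 2 ≤ r := by rw [hrdef]; nlinarith
    have h2 : 2 * ‖a‖ < r - lam.re := by linarith
    have hre2 : (lam - (r : ℂ)).re = lam.re - r := by simp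
    have h3 : r - lam.re ≤ |(lam - (r : ℂ)).re| := by
      rw [hre2]
      calc r - lam.re = -(lam.re - r) := by ring
        _ ≤ |lam.re - r| := neg_le_abs _
    have h4 : |(lam - (r : ℂ)).re| ≤ ‖lam - (r : ℂ)‖ := Complex.abs_re_le_norm _
    linarith
  -- key growth step
  have key : ∀ j : ℕ, p ≤ j → d (j + 1) ≠ 0 → ‖d j‖ ≤ ‖d (j + 1)‖ →
      ‖d (j + 1)‖ < ‖d (j + 2)‖ := by
    intro j hj hne hle
    have hr := hrec' j (le_trans hp hj)
    have h1 : ‖lam - (2 * ((j : ℂ) + 1) - 1) ^ 2‖ * ‖d (j + 1)‖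
        ≤ ‖a‖ * ‖d j‖ + ‖a‖ * ‖d (j + 2)‖ := by
      calc ‖lam - (2 * ((j : ℂ) + 1) - 1) ^ 2‖ * ‖d (j + 1)‖
          = ‖(lam - (2 * ((j : ℂ) + 1) - 1) ^ 2) * d (j + 1)‖ := (norm_mul _ _).symm
        _ = ‖a * d j + a * d (j + 2)‖ := by rw [hr]
        _ ≤ ‖a * d j‖ + ‖a * d (j + 2)‖ := norm_add_le _ _
        _ = ‖a‖ * ‖d j‖ + ‖a‖ * ‖d (j + 2)‖ := by rw [norm_mul, norm_mul]
    have hdn : 0 < ‖d (j + 1)‖ := norm_pos_iff.mpr hne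
    have hb := hbig j hj
    have h5 : ‖a‖ * ‖d j‖ ≤ ‖a‖ * ‖d (j + 1)‖ := by
      exact mul_le_mul_of_nonneg_left hle ha'.le
    nlinarith [mul_lt_mul_of_pos_right hb hdn]
  -- growth of norms
  have grow : ∀ j : ℕ, p ≤ j → d (j + 1) ≠ 0 → ‖d j‖ ≤ ‖d (j + 1)‖ →
      ∀ n : ℕ, ‖d (j + 1)‖ ≤ ‖d (j + n + 1)‖ ∧ ‖d (j + n)‖ ≤ ‖d (j + n + 1)‖ := by
    intro j hj hne hle n
    induction n with
    | zero => exact ⟨le_refl _, hle⟩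
    | succ n ih =>
      have hpos : 0 < ‖d (j + 1)‖ := norm_pos_iff.mpr hne
      have hne2 : d (j + n + 1) ≠ 0 := by
        intro h
        rw [show j + n + 1 = j + n + 1 from rfl, h] at ih
        simp only [norm_zero] at ih
        linarith [ih.1]
      have hk := key (j + n) (le_trans hj (Nat.le_add_right _ _)) hne2 ih.2
      exact ⟨le_of_lt (lt_of_le_of_lt ih.1 hk), le_of_lt hk⟩
  -- strict decrease when nonzero
  have lemma1 : ∀ j : ℕ, p ≤ j → d (j + 1) ≠ 0 → ‖d (j + 1)‖ < ‖d j‖ := by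
    intro j hj hne
    by_contra hcon
    push_neg at hcon
    have hpos : 0 < ‖d (j + 1)‖ := norm_pos_iff.mpr hne
    have hg := grow j hj hne hcon
    obtain ⟨N, hN⟩ := Metric.tendsto_atTop.mp hlim (‖d (j + 1)‖) hpos
    have h1 := hN (j + N + 1) (by omega)
    rw [dist_zero_right] at h1
    linarith [(hg N).1]
  -- two consecutive zeros kill everything
  have lemma2 : ∀ m : ℕ, 1 ≤ m → d m = 0 → d (m + 1) = 0 → ∀ k, 1 ≤ k → d k = 0 := by
    intro m hm h0 h1
    have fwd : ∀ n : ℕ, d (m + n) = 0 ∧ d (m + n + 1) = 0 := by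
      intro n
      induction n with
      | zero => exact ⟨h0, h1⟩
      | succ n ih =>
        refine ⟨ih.2, ?_⟩
        have hr := hrec' (m + n) (le_trans hm (Nat.le_add_right _ _))
        rw [ih.1, ih.2] at hr
        have h2 : a * d (m + n + 2) = 0 := by simpa using hr.symm
        rcases mul_eq_zero.mp h2 with h | h
        · exact absurd h ha
        · exact h
    have back : ∀ n : ℕ, ∀ j : ℕ, 1 ≤ j → j + n = m → d j = 0 ∧ d (j + 1) = 0 := by
      intro n
      induction n with
      | zero =>
        intro j hj hjm
        have : j = m := by omega
        subst this
        exact ⟨h0, h1⟩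
      | succ n ih =>
        intro j hj hjm
        have h2 := ih (j + 1) (by omega) (by omega)
        refine ⟨?_, h2.1⟩
        have hr := hrec' j hj
        have h21 : d (j + 1) = 0 := h2.1
        have h22 : d (j + 2) = 0 := h2.2
        rw [h21, h22] at hr
        have h3 : a * d j = 0 := by simpa using hr.symm
        rcases mul_eq_zero.mp h3 with h | h
        · exact absurd h ha
        · exact h
    intro k hk
    rcases le_or_gt k m with h | h
    · exact (back (m - k) k hk (by omega)).1
    · have h2 := fwd (k - m)
      have hmk : m + (k - m) = k := by omega
      rw [hmk] at h2
      exact h2.1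
  -- nonvanishing past p
  have nz : ∀ k : ℕ, p < k → d k ≠ 0 := by
    intro k hk h0
    by_cases h1 : d (k + 1) = 0
    · obtain ⟨k0, hk0, hk0ne⟩ := hnz
      exact hk0ne (lemma2 k (by omega) h0 h1 k0 hk0)
    · have h2 := lemma1 k (le_of_lt hk) h1
      have h3 : 0 < ‖d (k + 1)‖ := norm_pos_iff.mpr h1
      rw [h0, norm_zero] at h2
      linarith
  intro k hk
  obtain ⟨j, rfl⟩ : ∃ j, k = j + 1 := ⟨k - 1, by omega⟩
  have hj : p ≤ j := by omega
  have hne : d (j + 1) ≠ 0 := nz (j + 1) (by omega)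
  refine ⟨?_, norm_pos_iff.mpr hne⟩
  have h := lemma1 j hj hne
  simpa using h
end

section
/- Let a, λ ∈ ℂ, let I ⊆ ℕ₊ and set d(λ,I) = min_{k∈I} |λ−(2k−1)²| and assume d(λ,I) ≠ 0. If (d_k)_{k≥1} satisfies ∑_{k≥1}|d_k|² = 1, the recurrence (λ−1)d_1 = −a d_1 + a d_2 and (λ−(2k−1)²)d_k = a d_{k−1} + a d_{k+1} for k ≥ 2, then ∑_{k∈I} |d_k|² ≤ 4|a|² / d(λ,I)². -/
private noncomputable def Vd (d : ℕ → ℂ) : ℕ → ℝ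
  | 0 => 0
  | 1 => ‖d 1‖ ^ 2
  | (k + 2) => ‖d (k + 1)‖ ^ 2

private noncomputable def Wd (d : ℕ → ℂ) : ℕ → ℝ
  | 0 => 0
  | (k + 1) => ‖d (k + 2)‖ ^ 2

private lemma Vd_nonneg (d : ℕ → ℂ) : ∀ k, 0 ≤ Vd d k
  | 0 => le_refl 0
  | 1 => show (0:ℝ) ≤ ‖d 1‖ ^ 2 by positivity
  | (_ + 2) => show (0:ℝ) ≤ ‖d _‖ ^ 2 by positivity

private lemma Wd_nonneg (d : ℕ → ℂ) : ∀ k, 0 ≤ Wd d k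
  | 0 => le_refl 0
  | (_ + 1) => show (0:ℝ) ≤ ‖d _‖ ^ 2 by positivity

private lemma sq_bound (dm A x y z : ℝ) (hdm : 0 < dm) (hx : 0 ≤ x) (hA : 0 ≤ A)
    (hy : 0 ≤ y) (hz : 0 ≤ z) (h : dm * x ≤ A * (y + z)) :
    x ^ 2 ≤ 2 * (A ^ 2 / dm ^ 2) * (y ^ 2 + z ^ 2) := by
  have h2 : (dm * x) ^ 2 ≤ (A * (y + z)) ^ 2 :=
    pow_le_pow_left₀ (mul_nonneg hdm.le hx) h 2
  rw [show 2 * (A ^ 2 / dm ^ 2) * (y ^ 2 + z ^ 2) = 2 * A ^ 2 * (y ^ 2 + z ^ 2) / dm ^ 2 by ring,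
    le_div_iff₀ (by positivity)]
  nlinarith [sq_nonneg (y - z), sq_nonneg (A * (y + z))]

set_option maxHeartbeats 1000000 in
theorem stmt_5 (a lam : ℂ) (d : ℕ → ℂ) (I : Set ℕ)
    (hI : ∀ k ∈ I, 1 ≤ k)
    (dmin : ℝ)
    (hmin : IsLeast {x : ℝ | ∃ k ∈ I, ‖lam - (2 * (k : ℂ) - 1) ^ 2‖ = x} dmin)
    (hne : dmin ≠ 0)
    (hs : Summable (fun k => ‖d (k + 1)‖ ^ 2))
    (hnorm : ∑' k : ℕ, ‖d (k + 1)‖ ^ 2 = 1)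
    (hrec1 : (lam - 1) * d 1 = -a * d 1 + a * d 2)
    (hrec : ∀ k : ℕ, 2 ≤ k → (lam - (2 * (k : ℂ) - 1) ^ 2) * d k = a * d (k - 1) + a * d (k + 1)) :
    ∑' k : I, ‖d k‖ ^ 2 ≤ 4 * ‖a‖ ^ 2 / dmin ^ 2 := by
  have hdmpos : 0 < dmin := by
    obtain ⟨k, hk, he⟩ := hmin.1
    have h0 : (0:ℝ) ≤ dmin := he ▸ norm_nonneg _
    exact lt_of_le_of_ne h0 (Ne.symm hne)
  set C : ℝ := ‖a‖ ^ 2 / dmin ^ 2 with hC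
  -- pointwise bound
  have hpt : ∀ k ∈ I, ‖d k‖ ^ 2 ≤ 2 * C * (Vd d k + Wd d k) := by
    intro k hk
    have hk1 := hI k hk
    have hd : dmin ≤ ‖lam - (2 * (k : ℂ) - 1) ^ 2‖ := hmin.2 ⟨k, hk, rfl⟩
    rcases Nat.lt_or_ge k 2 with hk2 | hk2
    · have hk1' : k = 1 := by omega
      subst hk1'
      have hd' : dmin ≤ ‖lam - 1‖ := by
        have he : (lam - (2 * ((1:ℕ) : ℂ) - 1) ^ 2) = lam - 1 := by push_cast; ring
        rwa [he] at hd
      have hkey : dmin * ‖d 1‖ ≤ ‖a‖ * (‖d 1‖ + ‖d 2‖) := by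
        calc dmin * ‖d 1‖ ≤ ‖lam - 1‖ * ‖d 1‖ := by
              exact mul_le_mul_of_nonneg_right hd' (norm_nonneg _)
          _ = ‖(lam - 1) * d 1‖ := by rw [norm_mul]
          _ = ‖-a * d 1 + a * d 2‖ := by rw [hrec1]
          _ ≤ ‖-a * d 1‖ + ‖a * d 2‖ := norm_add_le _ _
          _ = ‖a‖ * (‖d 1‖ + ‖d 2‖) := by
              rw [norm_mul, norm_mul, norm_neg]; ring
      have := sq_bound dmin ‖a‖ ‖d 1‖ ‖d 1‖ ‖d 2‖ hdmpos (norm_nonneg _) (norm_nonneg _)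
        (norm_nonneg _) (norm_nonneg _) hkey
      simpa [Vd, Wd, hC] using this
    · obtain ⟨j, rfl⟩ : ∃ j, k = j + 2 := ⟨k - 2, by omega⟩
      have hr := hrec (j + 2) (by omega)
      have hsub : (j + 2) - 1 = j + 1 := by omega
      rw [hsub] at hr
      have hkey : dmin * ‖d (j + 2)‖ ≤ ‖a‖ * (‖d (j + 1)‖ + ‖d (j + 3)‖) := by
        calc dmin * ‖d (j + 2)‖
            ≤ ‖lam - (2 * ((j + 2 : ℕ) : ℂ) - 1) ^ 2‖ * ‖d (j + 2)‖ := by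
              exact mul_le_mul_of_nonneg_right hd (norm_nonneg _)
          _ = ‖(lam - (2 * ((j + 2 : ℕ) : ℂ) - 1) ^ 2) * d (j + 2)‖ := by rw [norm_mul]
          _ = ‖a * d (j + 1) + a * d (j + 2 + 1)‖ := by rw [hr]
          _ ≤ ‖a * d (j + 1)‖ + ‖a * d (j + 3)‖ := by
              have : j + 2 + 1 = j + 3 := by omega
              rw [this]; exact norm_add_le _ _
          _ = ‖a‖ * (‖d (j + 1)‖ + ‖d (j + 3)‖) := by rw [norm_mul, norm_mul]; ring
      have := sq_bound dmin ‖a‖ ‖d (j + 2)‖ ‖d (j + 1)‖ ‖d (j + 3)‖ hdmpos (norm_nonneg _)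
        (norm_nonneg _) (norm_nonneg _) (norm_nonneg _) hkey
      have hV : Vd d (j + 2) = ‖d (j + 1)‖ ^ 2 := rfl
      have hW : Wd d (j + 2) = ‖d (j + 3)‖ ^ 2 := rfl
      rw [hV, hW]
      have h3 : j + 2 + 1 = j + 3 := by omega
      rw [h3]
      simpa [hC] using this
  -- summabilities
  have hs2 : Summable (fun k => ‖d (k + 2)‖ ^ 2) :=
    (summable_nat_add_iff 1).mpr hs
  have hVs : Summable (Vd d) := by
    apply (summable_nat_add_iff 2).mp
    have : (fun n => Vd d (n + 2)) = fun k => ‖d (k + 1)‖ ^ 2 := rfl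
    rw [this]; exact hs
  have hWs : Summable (Wd d) := by
    apply (summable_nat_add_iff 1).mp
    have : (fun n => Wd d (n + 1)) = fun k => ‖d (k + 2)‖ ^ 2 := rfl
    rw [this]; exact hs2
  -- sums of V and W
  have hshift : ∑' k, ‖d (k + 1)‖ ^ 2 = ‖d 1‖ ^ 2 + ∑' k, ‖d (k + 2)‖ ^ 2 := by
    simpa using Summable.tsum_eq_zero_add hs
  have hVsum : ∑' k, Vd d k = ‖d 1‖ ^ 2 + 1 := by
    rw [Summable.tsum_eq_zero_add hVs]
    have h1 : Summable (fun n => Vd d (n + 1)) := (summable_nat_add_iff 1).mpr hVs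
    rw [Summable.tsum_eq_zero_add h1]
    have : ∑' k, Vd d (k + 1 + 1) = ∑' k, ‖d (k + 1)‖ ^ 2 := rfl
    rw [this, hnorm]
    simp [Vd]
  have hWsum : ∑' k, Wd d k = 1 - ‖d 1‖ ^ 2 := by
    rw [Summable.tsum_eq_zero_add hWs]
    have : ∑' k, Wd d (k + 1) = ∑' k, ‖d (k + 2)‖ ^ 2 := rfl
    rw [this]
    have h0 : Wd d 0 = 0 := rfl
    rw [h0, zero_add]
    linarith [hshift, hnorm]
  -- put together
  have hBs : Summable (fun k => 2 * C * (Vd d k + Wd d k)) :=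
    ((hVs.add hWs).mul_left _)
  have hub : ∀ k, I.indicator (fun k => ‖d k‖ ^ 2) k ≤ 2 * C * (Vd d k + Wd d k) := by
    intro k
    by_cases hk : k ∈ I
    · rw [Set.indicator_of_mem hk]; exact hpt k hk
    · rw [Set.indicator_of_notMem hk]
      have hCnn : 0 ≤ C := by positivity
      have hV := Vd_nonneg d k
      have hW := Wd_nonneg d k
      positivity
  have hus : Summable (I.indicator (fun k => ‖d k‖ ^ 2)) := by
    apply Summable.of_nonneg_of_le _ hub hBs
    intro k
    exact Set.indicator_nonneg (fun k _ => by positivity) k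
  calc ∑' k : I, ‖d k‖ ^ 2 = ∑' k, I.indicator (fun k => ‖d k‖ ^ 2) k :=
        tsum_subtype I (fun k => ‖d k‖ ^ 2)
    _ ≤ ∑' k, 2 * C * (Vd d k + Wd d k) := Summable.tsum_le_tsum hub hus hBs
    _ = 2 * C * (∑' k, Vd d k + ∑' k, Wd d k) := by
        rw [tsum_mul_left, Summable.tsum_add hVs hWs]
    _ = 4 * ‖a‖ ^ 2 / dmin ^ 2 := by
        rw [hVsum, hWsum, hC]; ring
end

section
/- Let d₁, d₂ be complex numbers with |d₁|² ≤ 1/2, |d₂|² ≤ 1/2, |d₁|² + |d₂|² > 1 − 0.03415, and |d₁² + d₂²| < 0.03415. Then the ratio z = d₂/d₁ satisfies |z² + 1| < 0.074 and z can be written as ±(i + δ) with |δ| < 0.04. -/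
lemma stmt_10_aux (a b : ℝ) (ha : 0 ≤ a) (hb : 0 ≤ b) (hab : a ≤ b)
    (htri : 2 ≤ a + b) (h : a * b < 0.074) : a < 0.04 := by
  nlinarith [mul_nonneg (sub_nonneg.2 hab) ha, sq_nonneg (a - 0.04), sq_nonneg (a - 1)]

theorem stmt_10 (d1 d2 : ℂ)
    (h1 : ‖d1‖ ^ 2 ≤ 1 / 2) (h2 : ‖d2‖ ^ 2 ≤ 1 / 2)
    (hsum : ‖d1‖ ^ 2 + ‖d2‖ ^ 2 > 1 - 0.03415)
    (horth : ‖d1 ^ 2 + d2 ^ 2‖ < 0.03415) :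
    ‖(d2 / d1) ^ 2 + 1‖ < 0.074 ∧
    ∃ δ : ℂ, ‖δ‖ < 0.04 ∧ (d2 / d1 = Complex.I + δ ∨ d2 / d1 = -(Complex.I + δ)) := by
  have hd1 : (0.46585 : ℝ) ≤ ‖d1‖ ^ 2 := by linarith
  have hd1pos : (0:ℝ) < ‖d1‖ ^ 2 := by linarith
  have hd1n : d1 ≠ 0 := by
    intro h
    rw [h] at hd1
    simp at hd1
    linarith
  have key : ‖(d2 / d1) ^ 2 + 1‖ < 0.074 := by
    have he : (d2 / d1) ^ 2 + 1 = (d1 ^ 2 + d2 ^ 2) / d1 ^ 2 := by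
      field_simp
      ring
    rw [he, norm_div, norm_pow]
    rw [div_lt_iff₀ hd1pos]
    nlinarith
  refine ⟨key, ?_⟩
  set z := d2 / d1 with hzdef
  have hfac : ‖z - Complex.I‖ * ‖z + Complex.I‖ < 0.074 := by
    rw [← norm_mul]
    have he : (z - Complex.I) * (z + Complex.I) = z ^ 2 + 1 := by
      linear_combination (-1 : ℂ) * Complex.I_sq
    rw [he]
    exact key
  have htri : (2:ℝ) ≤ ‖z - Complex.I‖ + ‖z + Complex.I‖ := by
    have h := norm_sub_le (z + Complex.I) (z - Complex.I)
    have he : (z + Complex.I) - (z - Complex.I) = 2 * Complex.I := by ring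
    rw [he, norm_mul, Complex.norm_I] at h
    rw [add_comm] at h; simpa using h
  rcases le_total ‖z - Complex.I‖ ‖z + Complex.I‖ with hle | hle
  · refine ⟨z - Complex.I, ?_, Or.inl (by ring)⟩
    exact stmt_10_aux _ _ (norm_nonneg _) (norm_nonneg _) hle htri hfac
  · refine ⟨-(z + Complex.I), ?_, Or.inr (by ring)⟩
    rw [norm_neg]
    have h' : ‖z + Complex.I‖ * ‖z - Complex.I‖ < 0.074 := by
      rw [mul_comm]; exact hfac
    have htri' : (2:ℝ) ≤ ‖z + Complex.I‖ + ‖z - Complex.I‖ := by linarith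
    exact stmt_10_aux _ _ (norm_nonneg _) (norm_nonneg _) hle htri' h'
end

section
/- Let a ∈ ℂ, a ≠ 0, and λ ∈ ℂ. Suppose (d_k)_{k≥1} is a square-summable, not identically zero sequence satisfying (λ−1)d₁ = −a d₁ + a d₂ and (λ−(2k−1)²)d_k = a d_{k−1} + a d_{k+1} for k ≥ 2. Then there exists n ≥ 1 with |λ − (2n−1)²| ≤ 2|a|. -/
lemma stmt_18_key {a lam c x y z : ℂ} (hz : z ≠ 0) (e : (lam - c) * z = x + y)
    (hx : ‖x‖ ≤ ‖a‖ * ‖z‖) (hy : ‖y‖ ≤ ‖a‖ * ‖z‖) : ‖lam - c‖ ≤ 2 * ‖a‖ := by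
  have hz' : 0 < ‖z‖ := norm_pos_iff.mpr hz
  have h : ‖lam - c‖ * ‖z‖ ≤ 2 * ‖a‖ * ‖z‖ := by
    rw [← norm_mul, e]
    calc ‖x + y‖ ≤ ‖x‖ + ‖y‖ := norm_add_le _ _
      _ ≤ ‖a‖ * ‖z‖ + ‖a‖ * ‖z‖ := add_le_add hx hy
      _ = 2 * ‖a‖ * ‖z‖ := by ring
  exact le_of_mul_le_mul_right h hz'

theorem stmt_18 (a lam : ℂ) (ha : a ≠ 0) (d : ℕ → ℂ)
    (hs : Summable (fun k => ‖d (k + 1)‖ ^ 2))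
    (hnz : ∃ k : ℕ, 1 ≤ k ∧ d k ≠ 0)
    (hrec1 : (lam - 1) * d 1 = -a * d 1 + a * d 2)
    (hrec : ∀ k : ℕ, 2 ≤ k → (lam - (2 * (k : ℂ) - 1) ^ 2) * d k = a * d (k - 1) + a * d (k + 1)) :
    ∃ n : ℕ, 1 ≤ n ∧ ‖lam - (2 * (n : ℂ) - 1) ^ 2‖ ≤ 2 * ‖a‖ := by
  set f : ℕ → ℝ := fun j => ‖d (j + 1)‖ with hf
  -- f tends to 0
  have htend2 : Filter.Tendsto (fun k => ‖d (k + 1)‖ ^ 2) Filter.atTop (nhds 0) :=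
    hs.tendsto_atTop_zero
  have htend : Filter.Tendsto f Filter.atTop (nhds 0) := by
    have := (htend2.sqrt)
    rw [Real.sqrt_zero] at this
    refine this.congr fun k => ?_
    simp [hf, Real.sqrt_sq (norm_nonneg _)]
  obtain ⟨k0, hk0, hdk0⟩ := hnz
  obtain ⟨j0, rfl⟩ : ∃ j0, k0 = j0 + 1 := ⟨k0 - 1, by omega⟩
  have hpos : 0 < f j0 := norm_pos_iff.mpr hdk0
  have hev : ∀ᶠ k in Filter.atTop, f k < f j0 :=
    htend.eventually (gt_mem_nhds hpos)
  obtain ⟨N, hN⟩ := Filter.eventually_atTop.mp hev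
  set M := max N j0 with hM
  obtain ⟨m, hmmem, hm⟩ := (Finset.range (M + 1)).exists_max_image f ⟨j0, by
    simp [hM]⟩
  have hmax : ∀ j : ℕ, f j ≤ f m := by
    intro j
    by_cases hj : j ≤ M
    · exact hm j (Finset.mem_range.mpr (by omega))
    · have h1 : f j < f j0 := hN j (by omega)
      have h2 : f j0 ≤ f m := hm j0 (Finset.mem_range.mpr (by omega))
      linarith
  set n := m + 1 with hn
  have hdn : d n ≠ 0 := by
    have := lt_of_lt_of_le hpos (hmax j0)
    exact norm_pos_iff.mp this
  have hmax' : ∀ k : ℕ, 1 ≤ k → ‖d k‖ ≤ ‖d n‖ := by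
    intro k hk
    obtain ⟨j, rfl⟩ : ∃ j, k = j + 1 := ⟨k - 1, by omega⟩
    exact hmax j
  have hna : 0 ≤ ‖a‖ := norm_nonneg a
  refine ⟨n, by omega, ?_⟩
  rcases Nat.lt_or_ge n 2 with h2 | h2
  · -- n = 1
    have hn1 : n = 1 := by omega
    rw [hn1] at hdn hmax' ⊢
    have hc : (2 * ((1 : ℕ) : ℂ) - 1) ^ 2 = 1 := by norm_num
    rw [hc]
    refine stmt_18_key (a := a) hdn hrec1 ?_ ?_
    · rw [norm_mul, norm_neg]
    · rw [norm_mul]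
      exact mul_le_mul_of_nonneg_left (hmax' 2 (by omega)) hna
  · refine stmt_18_key (a := a) hdn (hrec n h2) ?_ ?_
    · rw [norm_mul]
      exact mul_le_mul_of_nonneg_left (hmax' (n - 1) (by omega)) hna
    · rw [norm_mul]
      exact mul_le_mul_of_nonneg_left (hmax' (n + 1) (by omega)) hna
end

section
/- Let a ∈ ℂ with a ≠ 0, and let n ∈ ℕ satisfy 4n − 4 > (1+√2)|a|. If λ lies in the disk |λ − (2n−1)²| ≤ 2|a|, then for every k ≠ n one has |λ − (2k−1)²| ≥ |(2n−3)² − (2n−1)²| − 2|a| > 2√2 |a|. -/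
/-- Equality holds at `k = n - 1`: the odd square nearest to `(2n-1)²` is `(2n-3)²`. -/
lemma abs_odd_sq_sub_odd_sq_ge {k n : ℕ} (hkn : k ≠ n) :
    8 * ((n : ℝ) - 1) ≤ |(2 * (k : ℝ) - 1) ^ 2 - (2 * (n : ℝ) - 1) ^ 2| := by
  rcases Nat.lt_or_gt_of_ne hkn with hlt | hgt
  · have hk : (0 : ℝ) ≤ k := k.cast_nonneg
    rw [abs_of_nonpos (by nlinarith [(by exact_mod_cast hlt : (k : ℝ) + 1 ≤ n)])]
    rcases Nat.lt_or_ge (k + 1) n with hfar | hnext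
    · have hfar' : (k : ℝ) + 2 ≤ n := by exact_mod_cast hfar
      -- `(2n-1)² - (2k-1)² - 8(n-1) = 4(n-k-1)(n+k-2)`
      nlinarith [mul_nonneg (by linarith : (0 : ℝ) ≤ n - k - 1) (by linarith : (0 : ℝ) ≤ n + k - 2)]
    · obtain rfl : n = k + 1 := by omega
      push_cast
      linarith
  · have hnk : (n : ℝ) + 1 ≤ k := by exact_mod_cast hgt
    have hn : (0 : ℝ) ≤ n := n.cast_nonneg
    rw [abs_of_nonneg (by nlinarith)]
    nlinarith

lemma norm_odd_sq_sub_odd_sq_ge {k n : ℕ} (hkn : k ≠ n) :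
    8 * ((n : ℝ) - 1) ≤ ‖(2 * (k : ℂ) - 1) ^ 2 - (2 * (n : ℂ) - 1) ^ 2‖ := by
  have hcast : (2 * (k : ℂ) - 1) ^ 2 - (2 * (n : ℂ) - 1) ^ 2
      = (((2 * (k : ℝ) - 1) ^ 2 - (2 * (n : ℝ) - 1) ^ 2 : ℝ) : ℂ) := by
    push_cast; ring
  rw [hcast, Complex.norm_real, Real.norm_eq_abs]
  exact abs_odd_sq_sub_odd_sq_ge hkn

theorem stmt_19_general (a : ℂ) (n : ℕ)
    (hn : 4 * (n : ℝ) - 4 > (1 + Real.sqrt 2) * ‖a‖)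
    (lam : ℂ) (hlam : ‖lam - (2 * (n : ℂ) - 1) ^ 2‖ ≤ 2 * ‖a‖) :
    ∀ k : ℕ, 1 ≤ k → k ≠ n →
      ‖lam - (2 * (k : ℂ) - 1) ^ 2‖ ≥
        |(2 * (n : ℝ) - 3) ^ 2 - (2 * (n : ℝ) - 1) ^ 2| - 2 * ‖a‖ ∧
      |(2 * (n : ℝ) - 3) ^ 2 - (2 * (n : ℝ) - 1) ^ 2| - 2 * ‖a‖ > 2 * Real.sqrt 2 * ‖a‖ := by
  intro k _ hkn
  have hn1 : 1 ≤ (n : ℝ) := by nlinarith [Real.sqrt_nonneg 2, norm_nonneg a]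
  have hgap : |(2 * (n : ℝ) - 3) ^ 2 - (2 * (n : ℝ) - 1) ^ 2| = 8 * ((n : ℝ) - 1) := by
    rw [abs_of_nonpos (by nlinarith)]; ring
  rw [hgap]
  constructor
  · have htri := norm_sub_le_norm_sub_add_norm_sub
      ((2 * (k : ℂ) - 1) ^ 2) lam ((2 * (n : ℂ) - 1) ^ 2)
    rw [norm_sub_rev _ lam] at htri
    linarith [norm_odd_sq_sub_odd_sq_ge hkn]
  · linarith

theorem stmt_19 (a : ℂ) (ha : a ≠ 0) (n : ℕ)
    (hn : 4 * (n : ℝ) - 4 > (1 + Real.sqrt 2) * ‖a‖)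
    (lam : ℂ) (hlam : ‖lam - (2 * (n : ℂ) - 1) ^ 2‖ ≤ 2 * ‖a‖) :
    ∀ k : ℕ, 1 ≤ k → k ≠ n →
      ‖lam - (2 * (k : ℂ) - 1) ^ 2‖ ≥
        |(2 * (n : ℝ) - 3) ^ 2 - (2 * (n : ℝ) - 1) ^ 2| - 2 * ‖a‖ ∧
      |(2 * (n : ℝ) - 3) ^ 2 - (2 * (n : ℝ) - 1) ^ 2| - 2 * ‖a‖ > 2 * Real.sqrt 2 * ‖a‖ :=
  stmt_19_general a n hn lam hlam
end
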